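/- Let (X,Y) be a bivariate random vector with X independent of Y, and let h be the symmetrized Bergsma–Dassios kernel. Then the second projection satisfies the product formula h2((x1,y1),(x2,y2)) = (2/3) gX(x1,x2) gY(y1,y2), where gX(x1,x2) = E[a(x1,x2,X3,X4)] and gY(y1,y2) = E[a(y1,y2,Y3,Y4)], with X3,X4 i.i.d. copies of X and Y3,Y4 i.i.d. copies of Y. -/
import Mathlib


open Classical MeasureTheory

/-- The Bergsma–Dassios sign function `a`. -/
noncomputable def signA (z1 z2 z3 z4 : ℝ) : ℝ :=
  (if max z1 z3 < min z2 z4 then (1:ℝ) else 0)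
    + (if max z2 z4 < min z1 z3 then (1:ℝ) else 0)
    - (if max z1 z2 < min z3 z4 then (1:ℝ) else 0)
    - (if max z3 z4 < min z1 z2 then (1:ℝ) else 0)

/-- The symmetrized Bergsma–Dassios kernel `h`. -/
noncomputable def hKer (p : Fin 4 → ℝ × ℝ) : ℝ :=
  (1 / 24) * ∑ π : Equiv.Perm (Fin 4),
    signA (p (π 0)).1 (p (π 1)).1 (p (π 2)).1 (p (π 3)).1 *
      signA (p (π 0)).2 (p (π 1)).2 (p (π 2)).2 (p (π 3)).2

lemma abs_signA_le (z1 z2 z3 z4 : ℝ) : |signA z1 z2 z3 z4| ≤ 2 := by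
  unfold signA; split_ifs <;> norm_num

lemma signA_sym1 (a b c d : ℝ) : signA b a d c = signA a b c d := by
  unfold signA
  rw [max_comm b d, min_comm a c, max_comm a c, min_comm b d, max_comm b a,
    min_comm d c, max_comm d c, min_comm b a]
  ring

lemma signA_sym2 (a b c d : ℝ) : signA c d a b = signA a b c d := by
  unfold signA
  rw [max_comm c a, min_comm d b, max_comm d b, min_comm c a]
  ring

lemma signA_anti23 (a b c d : ℝ) : signA a c b d = -signA a b c d := by
  unfold signA; ring

lemma signA_anti14 (a b c d : ℝ) : signA d b c a = -signA a b c d := by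
  unfold signA
  rw [max_comm d c, min_comm b a, max_comm b a, min_comm d c, max_comm d b,
    min_comm c a, max_comm c a, min_comm d b]
  ring

lemma measurable_signA4 {α : Type*} [MeasurableSpace α] {f1 f2 f3 f4 : α → ℝ}
    (h1 : Measurable f1) (h2 : Measurable f2) (h3 : Measurable f3) (h4 : Measurable f4) :
    Measurable fun w => signA (f1 w) (f2 w) (f3 w) (f4 w) := by
  unfold signA
  exact ((((Measurable.ite (measurableSet_lt (h1.max h3) (h2.min h4)) measurable_const
      measurable_const).add
    (Measurable.ite (measurableSet_lt (h2.max h4) (h1.min h3)) measurable_const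
      measurable_const)).sub
    (Measurable.ite (measurableSet_lt (h1.max h2) (h3.min h4)) measurable_const
      measurable_const)).sub
    (Measurable.ite (measurableSet_lt (h3.max h4) (h1.min h2)) measurable_const
      measurable_const))

lemma integrable_of_bdd {α : Type*} [MeasurableSpace α] {m : Measure α} [IsFiniteMeasure m]
    {f : α → ℝ} (hm : Measurable f) {C : ℝ} (hb : ∀ x, |f x| ≤ C) : Integrable f m :=
  ⟨hm.aestronglyMeasurable,
    MeasureTheory.HasFiniteIntegral.of_bounded (C := C)
      (Filter.Eventually.of_forall fun x => by simpa using hb x)⟩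

lemma exch (m : Measure ℝ) [IsProbabilityMeasure m] (F : ℝ → ℝ → ℝ)
    (hF : Measurable fun p : ℝ × ℝ => F p.1 p.2) (hb : ∀ u v, |F u v| ≤ 2) :
    ∫ u, ∫ v, F u v ∂m ∂m = ∫ u, ∫ v, F v u ∂m ∂m := by
  have hint : Integrable (Function.uncurry F) (m.prod m) :=
    integrable_of_bdd hF (fun p => hb p.1 p.2)
  rw [MeasureTheory.integral_integral_swap hint]

lemma antisym_int_zero (m : Measure ℝ) [IsProbabilityMeasure m] (F : ℝ → ℝ → ℝ)
    (hF : Measurable fun p : ℝ × ℝ => F p.1 p.2) (hb : ∀ u v, |F u v| ≤ 2)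
    (hanti : ∀ u v, F u v = -F v u) :
    ∫ u, ∫ v, F u v ∂m ∂m = 0 := by
  have h1 := exch m F hF hb
  have h2 : ∫ u, ∫ v, F u v ∂m ∂m = -∫ u, ∫ v, F v u ∂m ∂m := by
    rw [show (fun u => ∫ v, F u v ∂m) = fun u => ∫ v, -F v u ∂m from
      funext fun u => by rw [show (fun v => F u v) = fun v => -F v u from funext fun v => hanti u v]]
    simp [integral_neg]
  linarith

lemma red0132 (m : Measure ℝ) [IsProbabilityMeasure m] (a b : ℝ) :
    (∫ u, ∫ v, signA a b v u ∂m ∂m) = ∫ u, ∫ v, signA a b u v ∂m ∂m := by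
  exact exch m (fun u v => signA a b v u)
    (measurable_signA4 measurable_const measurable_const measurable_snd measurable_fst)
    (fun u v => abs_signA_le _ _ _ _)

lemma red1023 (m : Measure ℝ) [IsProbabilityMeasure m] (a b : ℝ) :
    (∫ u, ∫ v, signA b a u v ∂m ∂m) = ∫ u, ∫ v, signA a b u v ∂m ∂m := by
  simp_rw [show ∀ u v : ℝ, signA b a u v = signA a b v u from fun u v => signA_sym1 a b v u]
  exact red0132 m a b

lemma red1032 (m : Measure ℝ) [IsProbabilityMeasure m] (a b : ℝ) :
    (∫ u, ∫ v, signA b a v u ∂m ∂m) = ∫ u, ∫ v, signA a b u v ∂m ∂m := by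
  simp_rw [show ∀ u v : ℝ, signA b a v u = signA a b u v from fun u v => signA_sym1 a b u v]

lemma red2301 (m : Measure ℝ) [IsProbabilityMeasure m] (a b : ℝ) :
    (∫ u, ∫ v, signA u v a b ∂m ∂m) = ∫ u, ∫ v, signA a b u v ∂m ∂m := by
  simp_rw [show ∀ u v : ℝ, signA u v a b = signA a b u v from fun u v => signA_sym2 a b u v]

lemma red2310 (m : Measure ℝ) [IsProbabilityMeasure m] (a b : ℝ) :
    (∫ u, ∫ v, signA u v b a ∂m ∂m) = ∫ u, ∫ v, signA a b u v ∂m ∂m := by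
  simp_rw [show ∀ u v : ℝ, signA u v b a = signA b a u v from fun u v => signA_sym2 b a u v]
  exact red1023 m a b

lemma red3201 (m : Measure ℝ) [IsProbabilityMeasure m] (a b : ℝ) :
    (∫ u, ∫ v, signA v u a b ∂m ∂m) = ∫ u, ∫ v, signA a b u v ∂m ∂m := by
  simp_rw [show ∀ u v : ℝ, signA v u a b = signA a b v u from fun u v => signA_sym2 a b v u]
  exact red0132 m a b

lemma red3210 (m : Measure ℝ) [IsProbabilityMeasure m] (a b : ℝ) :
    (∫ u, ∫ v, signA v u b a ∂m ∂m) = ∫ u, ∫ v, signA a b u v ∂m ∂m := by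
  simp_rw [show ∀ u v : ℝ, signA v u b a = signA b a v u from fun u v => signA_sym2 b a v u]
  exact red1032 m a b

lemma red0213 (m : Measure ℝ) [IsProbabilityMeasure m] (a b : ℝ) :
    (∫ u, ∫ v, signA a u b v ∂m ∂m) = -(∫ u, ∫ v, signA a b u v ∂m ∂m) := by
  simp_rw [show ∀ u v : ℝ, signA a u b v = -signA a b u v from fun u v => signA_anti23 a b u v,
    integral_neg]

lemma red0312 (m : Measure ℝ) [IsProbabilityMeasure m] (a b : ℝ) :
    (∫ u, ∫ v, signA a v b u ∂m ∂m) = -(∫ u, ∫ v, signA a b u v ∂m ∂m) := by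
  simp_rw [show ∀ u v : ℝ, signA a v b u = -signA a b v u from fun u v => signA_anti23 a b v u,
    integral_neg]
  rw [red0132 m a b]

lemma red1203 (m : Measure ℝ) [IsProbabilityMeasure m] (a b : ℝ) :
    (∫ u, ∫ v, signA b u a v ∂m ∂m) = -(∫ u, ∫ v, signA a b u v ∂m ∂m) := by
  simp_rw [show ∀ u v : ℝ, signA b u a v = -signA b a u v from fun u v => signA_anti23 b a u v,
    integral_neg]
  rw [red1023 m a b]

lemma red1302 (m : Measure ℝ) [IsProbabilityMeasure m] (a b : ℝ) :
    (∫ u, ∫ v, signA b v a u ∂m ∂m) = -(∫ u, ∫ v, signA a b u v ∂m ∂m) := by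
  simp_rw [show ∀ u v : ℝ, signA b v a u = -signA b a v u from fun u v => signA_anti23 b a v u,
    integral_neg]
  rw [red1032 m a b]

lemma red2031 (m : Measure ℝ) [IsProbabilityMeasure m] (a b : ℝ) :
    (∫ u, ∫ v, signA u a v b ∂m ∂m) = -(∫ u, ∫ v, signA a b u v ∂m ∂m) := by
  simp_rw [show ∀ u v : ℝ, signA u a v b = -signA u v a b from fun u v => signA_anti23 u v a b,
    integral_neg]
  rw [red2301 m a b]

lemma red2130 (m : Measure ℝ) [IsProbabilityMeasure m] (a b : ℝ) :
    (∫ u, ∫ v, signA u b v a ∂m ∂m) = -(∫ u, ∫ v, signA a b u v ∂m ∂m) := by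
  simp_rw [show ∀ u v : ℝ, signA u b v a = -signA u v b a from fun u v => signA_anti23 u v b a,
    integral_neg]
  rw [red2310 m a b]

lemma red3021 (m : Measure ℝ) [IsProbabilityMeasure m] (a b : ℝ) :
    (∫ u, ∫ v, signA v a u b ∂m ∂m) = -(∫ u, ∫ v, signA a b u v ∂m ∂m) := by
  simp_rw [show ∀ u v : ℝ, signA v a u b = -signA v u a b from fun u v => signA_anti23 v u a b,
    integral_neg]
  rw [red3201 m a b]

lemma red3120 (m : Measure ℝ) [IsProbabilityMeasure m] (a b : ℝ) :
    (∫ u, ∫ v, signA v b u a ∂m ∂m) = -(∫ u, ∫ v, signA a b u v ∂m ∂m) := by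
  simp_rw [show ∀ u v : ℝ, signA v b u a = -signA v u b a from fun u v => signA_anti23 v u b a,
    integral_neg]
  rw [red3210 m a b]

lemma red0231 (m : Measure ℝ) [IsProbabilityMeasure m] (a b : ℝ) :
    (∫ u, ∫ v, signA a u v b ∂m ∂m) = 0 := by
  exact antisym_int_zero m (fun u v => signA a u v b)
    (measurable_signA4 measurable_const measurable_fst measurable_snd measurable_const)
    (fun u v => abs_signA_le _ _ _ _) (fun u v => signA_anti23 a v u b)

lemma red0321 (m : Measure ℝ) [IsProbabilityMeasure m] (a b : ℝ) :
    (∫ u, ∫ v, signA a v u b ∂m ∂m) = 0 := by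
  exact antisym_int_zero m (fun u v => signA a v u b)
    (measurable_signA4 measurable_const measurable_snd measurable_fst measurable_const)
    (fun u v => abs_signA_le _ _ _ _) (fun u v => signA_anti23 a u v b)

lemma red1230 (m : Measure ℝ) [IsProbabilityMeasure m] (a b : ℝ) :
    (∫ u, ∫ v, signA b u v a ∂m ∂m) = 0 := by
  exact antisym_int_zero m (fun u v => signA b u v a)
    (measurable_signA4 measurable_const measurable_fst measurable_snd measurable_const)
    (fun u v => abs_signA_le _ _ _ _) (fun u v => signA_anti23 b v u a)

lemma red1320 (m : Measure ℝ) [IsProbabilityMeasure m] (a b : ℝ) :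
    (∫ u, ∫ v, signA b v u a ∂m ∂m) = 0 := by
  exact antisym_int_zero m (fun u v => signA b v u a)
    (measurable_signA4 measurable_const measurable_snd measurable_fst measurable_const)
    (fun u v => abs_signA_le _ _ _ _) (fun u v => signA_anti23 b u v a)

lemma red2013 (m : Measure ℝ) [IsProbabilityMeasure m] (a b : ℝ) :
    (∫ u, ∫ v, signA u a b v ∂m ∂m) = 0 := by
  exact antisym_int_zero m (fun u v => signA u a b v)
    (measurable_signA4 measurable_fst measurable_const measurable_const measurable_snd)
    (fun u v => abs_signA_le _ _ _ _) (fun u v => signA_anti14 v a b u)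

lemma red2103 (m : Measure ℝ) [IsProbabilityMeasure m] (a b : ℝ) :
    (∫ u, ∫ v, signA u b a v ∂m ∂m) = 0 := by
  exact antisym_int_zero m (fun u v => signA u b a v)
    (measurable_signA4 measurable_fst measurable_const measurable_const measurable_snd)
    (fun u v => abs_signA_le _ _ _ _) (fun u v => signA_anti14 v b a u)

lemma red3012 (m : Measure ℝ) [IsProbabilityMeasure m] (a b : ℝ) :
    (∫ u, ∫ v, signA v a b u ∂m ∂m) = 0 := by
  exact antisym_int_zero m (fun u v => signA v a b u)
    (measurable_signA4 measurable_snd measurable_const measurable_const measurable_fst)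
    (fun u v => abs_signA_le _ _ _ _) (fun u v => signA_anti14 u a b v)

lemma red3102 (m : Measure ℝ) [IsProbabilityMeasure m] (a b : ℝ) :
    (∫ u, ∫ v, signA v b a u ∂m ∂m) = 0 := by
  exact antisym_int_zero m (fun u v => signA v b a u)
    (measurable_signA4 measurable_snd measurable_const measurable_const measurable_fst)
    (fun u v => abs_signA_le _ _ _ _) (fun u v => signA_anti14 u b a v)


lemma factor (μ ν : Measure ℝ) [IsProbabilityMeasure μ] [IsProbabilityMeasure ν]
    (f g : ℝ → ℝ → ℝ)
    (hf : Measurable fun p : ℝ × ℝ => f p.1 p.2) (hg : Measurable fun p : ℝ × ℝ => g p.1 p.2)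
    (hfb : ∀ u v, |f u v| ≤ 2) (hgb : ∀ u v, |g u v| ≤ 2) :
    ∫ w : (ℝ × ℝ) × (ℝ × ℝ), f w.1.1 w.2.1 * g w.1.2 w.2.2 ∂((μ.prod ν).prod (μ.prod ν)) =
      (∫ u, ∫ v, f u v ∂μ ∂μ) * (∫ u, ∫ v, g u v ∂ν ∂ν) := by
  have hm : Measurable fun w : (ℝ × ℝ) × (ℝ × ℝ) => f w.1.1 w.2.1 * g w.1.2 w.2.2 := by
    have h1 : Measurable fun w : (ℝ × ℝ) × (ℝ × ℝ) => f w.1.1 w.2.1 :=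
      hf.comp (measurable_fst.fst.prodMk measurable_snd.fst)
    have h2 : Measurable fun w : (ℝ × ℝ) × (ℝ × ℝ) => g w.1.2 w.2.2 :=
      hg.comp (measurable_fst.snd.prodMk measurable_snd.snd)
    exact h1.mul h2
  have hint : Integrable (fun w : (ℝ × ℝ) × (ℝ × ℝ) => f w.1.1 w.2.1 * g w.1.2 w.2.2)
      ((μ.prod ν).prod (μ.prod ν)) := by
    refine integrable_of_bdd hm (C := 4) fun w => ?_
    calc |f w.1.1 w.2.1 * g w.1.2 w.2.2| = |f w.1.1 w.2.1| * |g w.1.2 w.2.2| := abs_mul _ _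
    _ ≤ 2 * 2 := by
        exact mul_le_mul (hfb _ _) (hgb _ _) (abs_nonneg _) (by norm_num)
    _ = 4 := by norm_num
  rw [MeasureTheory.integral_prod _ hint]
  have inner : ∀ z3 : ℝ × ℝ, (∫ z4 : ℝ × ℝ, f z3.1 z4.1 * g z3.2 z4.2 ∂(μ.prod ν)) =
      (∫ t, f z3.1 t ∂μ) * ∫ s, g z3.2 s ∂ν := fun z3 =>
    integral_prod_mul (μ := μ) (ν := ν) (fun t => f z3.1 t) (fun s => g z3.2 s)
  simp only [inner]
  exact integral_prod_mul (μ := μ) (ν := ν) (fun u => ∫ t, f u t ∂μ) (fun v => ∫ s, g v s ∂ν)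

theorem perm2_sum (G : Fin 2 → Fin 2 → ℝ) :
    ∑ π : Equiv.Perm (Fin 2), G (π 0) (π 1) = G 0 1 + G 1 0 := by
  rw [← Equiv.sum_comp Equiv.Perm.decomposeFin.symm
      (fun π : Equiv.Perm (Fin 2) => G (π 0) (π 1))]
  rw [Fintype.sum_prod_type]
  simp [Fin.sum_univ_two, Equiv.Perm.decomposeFin_symm_apply_zero,
    Equiv.Perm.decomposeFin_symm_apply_one]

theorem perm3_sum (G : Fin 3 → Fin 3 → Fin 3 → ℝ) :
    ∑ π : Equiv.Perm (Fin 3), G (π 0) (π 1) (π 2) =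
      G 0 1 2 + G 0 2 1 + G 1 0 2 + G 1 2 0 + G 2 0 1 + G 2 1 0 := by
  rw [← Equiv.sum_comp Equiv.Perm.decomposeFin.symm
      (fun π : Equiv.Perm (Fin 3) => G (π 0) (π 1) (π 2))]
  rw [Fintype.sum_prod_type]
  simp only [Fin.sum_univ_three, Equiv.Perm.decomposeFin_symm_apply_zero,
    Equiv.Perm.decomposeFin_symm_apply_one,
    show (2:Fin 3) = (1:Fin 2).succ from rfl,
    Equiv.Perm.decomposeFin_symm_apply_succ]
  rw [perm2_sum (fun a b => G 0 ((Equiv.swap 0 0) a.succ) ((Equiv.swap 0 0) b.succ)),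
      perm2_sum (fun a b => G 1 ((Equiv.swap 0 1) a.succ) ((Equiv.swap 0 1) b.succ)),
      perm2_sum (fun a b => G (Fin.succ 1) ((Equiv.swap 0 (Fin.succ 1)) a.succ) ((Equiv.swap 0 (Fin.succ 1)) b.succ))]
  norm_num [Equiv.swap_apply_def, Fin.ext_iff]
  ring

theorem perm4_sum (G : Fin 4 → Fin 4 → Fin 4 → Fin 4 → ℝ) :
    ∑ π : Equiv.Perm (Fin 4), G (π 0) (π 1) (π 2) (π 3) =
      ((G 0 1 2 3 + G 0 1 3 2 + G 0 2 1 3 + G 0 2 3 1 + G 0 3 1 2 + G 0 3 2 1)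
    + (G 1 0 2 3 + G 1 0 3 2 + G 1 2 0 3 + G 1 2 3 0 + G 1 3 0 2 + G 1 3 2 0))
    + ((G 2 0 1 3 + G 2 0 3 1 + G 2 1 0 3 + G 2 1 3 0 + G 2 3 0 1 + G 2 3 1 0)
    + (G 3 0 1 2 + G 3 0 2 1 + G 3 1 0 2 + G 3 1 2 0 + G 3 2 0 1 + G 3 2 1 0)) := by
  rw [← Equiv.sum_comp Equiv.Perm.decomposeFin.symm
      (fun π : Equiv.Perm (Fin 4) => G (π 0) (π 1) (π 2) (π 3))]
  rw [Fintype.sum_prod_type]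
  simp only [Fin.sum_univ_four, Equiv.Perm.decomposeFin_symm_apply_zero,
    Equiv.Perm.decomposeFin_symm_apply_one,
    show (2:Fin 4) = (1:Fin 3).succ from rfl,
    show (3:Fin 4) = (2:Fin 3).succ from rfl,
    Equiv.Perm.decomposeFin_symm_apply_succ]
  rw [perm3_sum (fun a b c => G 0 ((Equiv.swap 0 0) a.succ) ((Equiv.swap 0 0) b.succ) ((Equiv.swap 0 0) c.succ)),
      perm3_sum (fun a b c => G 1 ((Equiv.swap 0 1) a.succ) ((Equiv.swap 0 1) b.succ) ((Equiv.swap 0 1) c.succ)),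
      perm3_sum (fun a b c => G (Fin.succ 1) ((Equiv.swap 0 (Fin.succ 1)) a.succ) ((Equiv.swap 0 (Fin.succ 1)) b.succ) ((Equiv.swap 0 (Fin.succ 1)) c.succ)),
      perm3_sum (fun a b c => G (Fin.succ 2) ((Equiv.swap 0 (Fin.succ 2)) a.succ) ((Equiv.swap 0 (Fin.succ 2)) b.succ) ((Equiv.swap 0 (Fin.succ 2)) c.succ))]
  norm_num [Equiv.swap_apply_def, Fin.ext_iff]
  ring


/-- Product formula for the second projection `h₂` under independence. -/
theorem h2_product_formula
    (μ ν : Measure ℝ) [IsProbabilityMeasure μ] [IsProbabilityMeasure ν]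
    (x1 y1 x2 y2 : ℝ) :
    (∫ z3, ∫ z4, hKer ![(x1, y1), (x2, y2), z3, z4] ∂(μ.prod ν) ∂(μ.prod ν)) =
      (2 / 3) * (∫ x3, ∫ x4, signA x1 x2 x3 x4 ∂μ ∂μ)
        * (∫ y3, ∫ y4, signA y1 y2 y3 y4 ∂ν ∂ν) := by
  have hPm : ∀ j : Fin 4, Measurable fun w : (ℝ × ℝ) × (ℝ × ℝ) =>
      (![(x1, y1), (x2, y2), w.1, w.2] : Fin 4 → ℝ × ℝ) j := by
    intro j
    fin_cases j
    · simpa using (measurable_const : Measurable fun _ : (ℝ × ℝ) × (ℝ × ℝ) => ((x1, y1) : ℝ × ℝ))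
    · simpa using (measurable_const : Measurable fun _ : (ℝ × ℝ) × (ℝ × ℝ) => ((x2, y2) : ℝ × ℝ))
    · simpa using (measurable_fst : Measurable fun w : (ℝ × ℝ) × (ℝ × ℝ) => w.1)
    · simpa using (measurable_snd : Measurable fun w : (ℝ × ℝ) × (ℝ × ℝ) => w.2)
  have hterm : ∀ π : Equiv.Perm (Fin 4),
      Integrable (fun w : (ℝ × ℝ) × (ℝ × ℝ) =>
        signA (![(x1, y1), (x2, y2), w.1, w.2] (π 0)).1 (![(x1, y1), (x2, y2), w.1, w.2] (π 1)).1
            (![(x1, y1), (x2, y2), w.1, w.2] (π 2)).1 (![(x1, y1), (x2, y2), w.1, w.2] (π 3)).1 *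
          signA (![(x1, y1), (x2, y2), w.1, w.2] (π 0)).2 (![(x1, y1), (x2, y2), w.1, w.2] (π 1)).2
            (![(x1, y1), (x2, y2), w.1, w.2] (π 2)).2 (![(x1, y1), (x2, y2), w.1, w.2] (π 3)).2)
        ((μ.prod ν).prod (μ.prod ν)) := by
    intro π
    refine integrable_of_bdd
      ((measurable_signA4 (hPm (π 0)).fst (hPm (π 1)).fst (hPm (π 2)).fst (hPm (π 3)).fst).mul
        (measurable_signA4 (hPm (π 0)).snd (hPm (π 1)).snd (hPm (π 2)).snd (hPm (π 3)).snd))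
      (C := 4) fun w => ?_
    rw [abs_mul]
    calc |signA _ _ _ _| * |signA _ _ _ _| ≤ 2 * 2 :=
          mul_le_mul (abs_signA_le _ _ _ _) (abs_signA_le _ _ _ _) (abs_nonneg _) (by norm_num)
      _ = 4 := by norm_num
  have hKmeas : Measurable fun w : (ℝ × ℝ) × (ℝ × ℝ) => hKer ![(x1, y1), (x2, y2), w.1, w.2] := by
    unfold hKer
    exact (Finset.measurable_sum _ fun π _ =>
      ((measurable_signA4 (hPm (π 0)).fst (hPm (π 1)).fst (hPm (π 2)).fst (hPm (π 3)).fst).mul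
        (measurable_signA4 (hPm (π 0)).snd (hPm (π 1)).snd (hPm (π 2)).snd (hPm (π 3)).snd))).const_mul _
  have hKbdd : ∀ w : (ℝ × ℝ) × (ℝ × ℝ), |hKer ![(x1, y1), (x2, y2), w.1, w.2]| ≤ 4 := by
    intro w
    unfold hKer
    rw [abs_mul]
    have h2 : |∑ π : Equiv.Perm (Fin 4),
        signA (![(x1, y1), (x2, y2), w.1, w.2] (π 0)).1 (![(x1, y1), (x2, y2), w.1, w.2] (π 1)).1
            (![(x1, y1), (x2, y2), w.1, w.2] (π 2)).1 (![(x1, y1), (x2, y2), w.1, w.2] (π 3)).1 *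
          signA (![(x1, y1), (x2, y2), w.1, w.2] (π 0)).2 (![(x1, y1), (x2, y2), w.1, w.2] (π 1)).2
            (![(x1, y1), (x2, y2), w.1, w.2] (π 2)).2 (![(x1, y1), (x2, y2), w.1, w.2] (π 3)).2|
        ≤ ∑ _π : Equiv.Perm (Fin 4), (4 : ℝ) := by
      refine (Finset.abs_sum_le_sum_abs _ _).trans (Finset.sum_le_sum fun π _ => ?_)
      rw [abs_mul]
      calc |signA _ _ _ _| * |signA _ _ _ _| ≤ 2 * 2 :=
            mul_le_mul (abs_signA_le _ _ _ _) (abs_signA_le _ _ _ _) (abs_nonneg _) (by norm_num)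
        _ = 4 := by norm_num
    have h3 : ∑ _π : Equiv.Perm (Fin 4), (4 : ℝ) = 96 := by
      simp only [Finset.sum_const, Finset.card_univ, Fintype.card_perm, nsmul_eq_mul]
      norm_num [Nat.factorial]
    calc |1 / 24| * |_| ≤ |1 / (24:ℝ)| * 96 := by
          rw [h3] at h2
          exact mul_le_mul_of_nonneg_left h2 (abs_nonneg _)
      _ = 4 := by
          rw [abs_of_nonneg (by norm_num : (0:ℝ) ≤ 1/24)]
          norm_num
  have hint : Integrable (Function.uncurry fun z3 z4 : ℝ × ℝ =>
      hKer ![(x1, y1), (x2, y2), z3, z4]) ((μ.prod ν).prod (μ.prod ν)) :=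
    integrable_of_bdd hKmeas hKbdd
  rw [show (∫ z3, ∫ z4, hKer ![(x1, y1), (x2, y2), z3, z4] ∂(μ.prod ν) ∂(μ.prod ν)) =
      ∫ w : (ℝ × ℝ) × (ℝ × ℝ), hKer ![(x1, y1), (x2, y2), w.1, w.2]
        ∂((μ.prod ν).prod (μ.prod ν)) from integral_integral hint]
  simp only [hKer]
  rw [integral_const_mul]
  rw [integral_finset_sum _ fun π _ => hterm π]
  rw [perm4_sum (fun i j k l => ∫ w : (ℝ × ℝ) × (ℝ × ℝ),
    signA (![(x1, y1), (x2, y2), w.1, w.2] i).1 (![(x1, y1), (x2, y2), w.1, w.2] j).1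
        (![(x1, y1), (x2, y2), w.1, w.2] k).1 (![(x1, y1), (x2, y2), w.1, w.2] l).1 *
      signA (![(x1, y1), (x2, y2), w.1, w.2] i).2 (![(x1, y1), (x2, y2), w.1, w.2] j).2
        (![(x1, y1), (x2, y2), w.1, w.2] k).2 (![(x1, y1), (x2, y2), w.1, w.2] l).2
    ∂((μ.prod ν).prod (μ.prod ν)))]
  simp only [Matrix.cons_val_zero, Matrix.cons_val_one, Matrix.head_cons,
    Matrix.cons_val_two, Matrix.tail_cons, Matrix.cons_val_three]
  have e0123 : (∫ w : (ℝ × ℝ) × ℝ × ℝ, signA x1 x2 w.1.1 w.2.1 * signA y1 y2 w.1.2 w.2.2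
      ∂((μ.prod ν).prod (μ.prod ν))) =
      (∫ u, ∫ v, signA x1 x2 u v ∂μ ∂μ) * (∫ u, ∫ v, signA y1 y2 u v ∂ν ∂ν) :=
    factor μ ν (fun u v => signA x1 x2 u v) (fun u v => signA y1 y2 u v)
      (measurable_signA4 measurable_const measurable_const measurable_fst measurable_snd)
      (measurable_signA4 measurable_const measurable_const measurable_fst measurable_snd)
      (fun u v => abs_signA_le _ _ _ _) (fun u v => abs_signA_le _ _ _ _)
  have e0132 : (∫ w : (ℝ × ℝ) × ℝ × ℝ, signA x1 x2 w.2.1 w.1.1 * signA y1 y2 w.2.2 w.1.2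
      ∂((μ.prod ν).prod (μ.prod ν))) =
      (∫ u, ∫ v, signA x1 x2 v u ∂μ ∂μ) * (∫ u, ∫ v, signA y1 y2 v u ∂ν ∂ν) :=
    factor μ ν (fun u v => signA x1 x2 v u) (fun u v => signA y1 y2 v u)
      (measurable_signA4 measurable_const measurable_const measurable_snd measurable_fst)
      (measurable_signA4 measurable_const measurable_const measurable_snd measurable_fst)
      (fun u v => abs_signA_le _ _ _ _) (fun u v => abs_signA_le _ _ _ _)
  have e0213 : (∫ w : (ℝ × ℝ) × ℝ × ℝ, signA x1 w.1.1 x2 w.2.1 * signA y1 w.1.2 y2 w.2.2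
      ∂((μ.prod ν).prod (μ.prod ν))) =
      (∫ u, ∫ v, signA x1 u x2 v ∂μ ∂μ) * (∫ u, ∫ v, signA y1 u y2 v ∂ν ∂ν) :=
    factor μ ν (fun u v => signA x1 u x2 v) (fun u v => signA y1 u y2 v)
      (measurable_signA4 measurable_const measurable_fst measurable_const measurable_snd)
      (measurable_signA4 measurable_const measurable_fst measurable_const measurable_snd)
      (fun u v => abs_signA_le _ _ _ _) (fun u v => abs_signA_le _ _ _ _)
  have e0231 : (∫ w : (ℝ × ℝ) × ℝ × ℝ, signA x1 w.1.1 w.2.1 x2 * signA y1 w.1.2 w.2.2 y2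
      ∂((μ.prod ν).prod (μ.prod ν))) =
      (∫ u, ∫ v, signA x1 u v x2 ∂μ ∂μ) * (∫ u, ∫ v, signA y1 u v y2 ∂ν ∂ν) :=
    factor μ ν (fun u v => signA x1 u v x2) (fun u v => signA y1 u v y2)
      (measurable_signA4 measurable_const measurable_fst measurable_snd measurable_const)
      (measurable_signA4 measurable_const measurable_fst measurable_snd measurable_const)
      (fun u v => abs_signA_le _ _ _ _) (fun u v => abs_signA_le _ _ _ _)
  have e0312 : (∫ w : (ℝ × ℝ) × ℝ × ℝ, signA x1 w.2.1 x2 w.1.1 * signA y1 w.2.2 y2 w.1.2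
      ∂((μ.prod ν).prod (μ.prod ν))) =
      (∫ u, ∫ v, signA x1 v x2 u ∂μ ∂μ) * (∫ u, ∫ v, signA y1 v y2 u ∂ν ∂ν) :=
    factor μ ν (fun u v => signA x1 v x2 u) (fun u v => signA y1 v y2 u)
      (measurable_signA4 measurable_const measurable_snd measurable_const measurable_fst)
      (measurable_signA4 measurable_const measurable_snd measurable_const measurable_fst)
      (fun u v => abs_signA_le _ _ _ _) (fun u v => abs_signA_le _ _ _ _)
  have e0321 : (∫ w : (ℝ × ℝ) × ℝ × ℝ, signA x1 w.2.1 w.1.1 x2 * signA y1 w.2.2 w.1.2 y2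
      ∂((μ.prod ν).prod (μ.prod ν))) =
      (∫ u, ∫ v, signA x1 v u x2 ∂μ ∂μ) * (∫ u, ∫ v, signA y1 v u y2 ∂ν ∂ν) :=
    factor μ ν (fun u v => signA x1 v u x2) (fun u v => signA y1 v u y2)
      (measurable_signA4 measurable_const measurable_snd measurable_fst measurable_const)
      (measurable_signA4 measurable_const measurable_snd measurable_fst measurable_const)
      (fun u v => abs_signA_le _ _ _ _) (fun u v => abs_signA_le _ _ _ _)
  have e1023 : (∫ w : (ℝ × ℝ) × ℝ × ℝ, signA x2 x1 w.1.1 w.2.1 * signA y2 y1 w.1.2 w.2.2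
      ∂((μ.prod ν).prod (μ.prod ν))) =
      (∫ u, ∫ v, signA x2 x1 u v ∂μ ∂μ) * (∫ u, ∫ v, signA y2 y1 u v ∂ν ∂ν) :=
    factor μ ν (fun u v => signA x2 x1 u v) (fun u v => signA y2 y1 u v)
      (measurable_signA4 measurable_const measurable_const measurable_fst measurable_snd)
      (measurable_signA4 measurable_const measurable_const measurable_fst measurable_snd)
      (fun u v => abs_signA_le _ _ _ _) (fun u v => abs_signA_le _ _ _ _)
  have e1032 : (∫ w : (ℝ × ℝ) × ℝ × ℝ, signA x2 x1 w.2.1 w.1.1 * signA y2 y1 w.2.2 w.1.2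
      ∂((μ.prod ν).prod (μ.prod ν))) =
      (∫ u, ∫ v, signA x2 x1 v u ∂μ ∂μ) * (∫ u, ∫ v, signA y2 y1 v u ∂ν ∂ν) :=
    factor μ ν (fun u v => signA x2 x1 v u) (fun u v => signA y2 y1 v u)
      (measurable_signA4 measurable_const measurable_const measurable_snd measurable_fst)
      (measurable_signA4 measurable_const measurable_const measurable_snd measurable_fst)
      (fun u v => abs_signA_le _ _ _ _) (fun u v => abs_signA_le _ _ _ _)
  have e1203 : (∫ w : (ℝ × ℝ) × ℝ × ℝ, signA x2 w.1.1 x1 w.2.1 * signA y2 w.1.2 y1 w.2.2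
      ∂((μ.prod ν).prod (μ.prod ν))) =
      (∫ u, ∫ v, signA x2 u x1 v ∂μ ∂μ) * (∫ u, ∫ v, signA y2 u y1 v ∂ν ∂ν) :=
    factor μ ν (fun u v => signA x2 u x1 v) (fun u v => signA y2 u y1 v)
      (measurable_signA4 measurable_const measurable_fst measurable_const measurable_snd)
      (measurable_signA4 measurable_const measurable_fst measurable_const measurable_snd)
      (fun u v => abs_signA_le _ _ _ _) (fun u v => abs_signA_le _ _ _ _)
  have e1230 : (∫ w : (ℝ × ℝ) × ℝ × ℝ, signA x2 w.1.1 w.2.1 x1 * signA y2 w.1.2 w.2.2 y1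
      ∂((μ.prod ν).prod (μ.prod ν))) =
      (∫ u, ∫ v, signA x2 u v x1 ∂μ ∂μ) * (∫ u, ∫ v, signA y2 u v y1 ∂ν ∂ν) :=
    factor μ ν (fun u v => signA x2 u v x1) (fun u v => signA y2 u v y1)
      (measurable_signA4 measurable_const measurable_fst measurable_snd measurable_const)
      (measurable_signA4 measurable_const measurable_fst measurable_snd measurable_const)
      (fun u v => abs_signA_le _ _ _ _) (fun u v => abs_signA_le _ _ _ _)
  have e1302 : (∫ w : (ℝ × ℝ) × ℝ × ℝ, signA x2 w.2.1 x1 w.1.1 * signA y2 w.2.2 y1 w.1.2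
      ∂((μ.prod ν).prod (μ.prod ν))) =
      (∫ u, ∫ v, signA x2 v x1 u ∂μ ∂μ) * (∫ u, ∫ v, signA y2 v y1 u ∂ν ∂ν) :=
    factor μ ν (fun u v => signA x2 v x1 u) (fun u v => signA y2 v y1 u)
      (measurable_signA4 measurable_const measurable_snd measurable_const measurable_fst)
      (measurable_signA4 measurable_const measurable_snd measurable_const measurable_fst)
      (fun u v => abs_signA_le _ _ _ _) (fun u v => abs_signA_le _ _ _ _)
  have e1320 : (∫ w : (ℝ × ℝ) × ℝ × ℝ, signA x2 w.2.1 w.1.1 x1 * signA y2 w.2.2 w.1.2 y1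
      ∂((μ.prod ν).prod (μ.prod ν))) =
      (∫ u, ∫ v, signA x2 v u x1 ∂μ ∂μ) * (∫ u, ∫ v, signA y2 v u y1 ∂ν ∂ν) :=
    factor μ ν (fun u v => signA x2 v u x1) (fun u v => signA y2 v u y1)
      (measurable_signA4 measurable_const measurable_snd measurable_fst measurable_const)
      (measurable_signA4 measurable_const measurable_snd measurable_fst measurable_const)
      (fun u v => abs_signA_le _ _ _ _) (fun u v => abs_signA_le _ _ _ _)
  have e2013 : (∫ w : (ℝ × ℝ) × ℝ × ℝ, signA w.1.1 x1 x2 w.2.1 * signA w.1.2 y1 y2 w.2.2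
      ∂((μ.prod ν).prod (μ.prod ν))) =
      (∫ u, ∫ v, signA u x1 x2 v ∂μ ∂μ) * (∫ u, ∫ v, signA u y1 y2 v ∂ν ∂ν) :=
    factor μ ν (fun u v => signA u x1 x2 v) (fun u v => signA u y1 y2 v)
      (measurable_signA4 measurable_fst measurable_const measurable_const measurable_snd)
      (measurable_signA4 measurable_fst measurable_const measurable_const measurable_snd)
      (fun u v => abs_signA_le _ _ _ _) (fun u v => abs_signA_le _ _ _ _)
  have e2031 : (∫ w : (ℝ × ℝ) × ℝ × ℝ, signA w.1.1 x1 w.2.1 x2 * signA w.1.2 y1 w.2.2 y2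
      ∂((μ.prod ν).prod (μ.prod ν))) =
      (∫ u, ∫ v, signA u x1 v x2 ∂μ ∂μ) * (∫ u, ∫ v, signA u y1 v y2 ∂ν ∂ν) :=
    factor μ ν (fun u v => signA u x1 v x2) (fun u v => signA u y1 v y2)
      (measurable_signA4 measurable_fst measurable_const measurable_snd measurable_const)
      (measurable_signA4 measurable_fst measurable_const measurable_snd measurable_const)
      (fun u v => abs_signA_le _ _ _ _) (fun u v => abs_signA_le _ _ _ _)
  have e2103 : (∫ w : (ℝ × ℝ) × ℝ × ℝ, signA w.1.1 x2 x1 w.2.1 * signA w.1.2 y2 y1 w.2.2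
      ∂((μ.prod ν).prod (μ.prod ν))) =
      (∫ u, ∫ v, signA u x2 x1 v ∂μ ∂μ) * (∫ u, ∫ v, signA u y2 y1 v ∂ν ∂ν) :=
    factor μ ν (fun u v => signA u x2 x1 v) (fun u v => signA u y2 y1 v)
      (measurable_signA4 measurable_fst measurable_const measurable_const measurable_snd)
      (measurable_signA4 measurable_fst measurable_const measurable_const measurable_snd)
      (fun u v => abs_signA_le _ _ _ _) (fun u v => abs_signA_le _ _ _ _)
  have e2130 : (∫ w : (ℝ × ℝ) × ℝ × ℝ, signA w.1.1 x2 w.2.1 x1 * signA w.1.2 y2 w.2.2 y1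
      ∂((μ.prod ν).prod (μ.prod ν))) =
      (∫ u, ∫ v, signA u x2 v x1 ∂μ ∂μ) * (∫ u, ∫ v, signA u y2 v y1 ∂ν ∂ν) :=
    factor μ ν (fun u v => signA u x2 v x1) (fun u v => signA u y2 v y1)
      (measurable_signA4 measurable_fst measurable_const measurable_snd measurable_const)
      (measurable_signA4 measurable_fst measurable_const measurable_snd measurable_const)
      (fun u v => abs_signA_le _ _ _ _) (fun u v => abs_signA_le _ _ _ _)
  have e2301 : (∫ w : (ℝ × ℝ) × ℝ × ℝ, signA w.1.1 w.2.1 x1 x2 * signA w.1.2 w.2.2 y1 y2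
      ∂((μ.prod ν).prod (μ.prod ν))) =
      (∫ u, ∫ v, signA u v x1 x2 ∂μ ∂μ) * (∫ u, ∫ v, signA u v y1 y2 ∂ν ∂ν) :=
    factor μ ν (fun u v => signA u v x1 x2) (fun u v => signA u v y1 y2)
      (measurable_signA4 measurable_fst measurable_snd measurable_const measurable_const)
      (measurable_signA4 measurable_fst measurable_snd measurable_const measurable_const)
      (fun u v => abs_signA_le _ _ _ _) (fun u v => abs_signA_le _ _ _ _)
  have e2310 : (∫ w : (ℝ × ℝ) × ℝ × ℝ, signA w.1.1 w.2.1 x2 x1 * signA w.1.2 w.2.2 y2 y1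
      ∂((μ.prod ν).prod (μ.prod ν))) =
      (∫ u, ∫ v, signA u v x2 x1 ∂μ ∂μ) * (∫ u, ∫ v, signA u v y2 y1 ∂ν ∂ν) :=
    factor μ ν (fun u v => signA u v x2 x1) (fun u v => signA u v y2 y1)
      (measurable_signA4 measurable_fst measurable_snd measurable_const measurable_const)
      (measurable_signA4 measurable_fst measurable_snd measurable_const measurable_const)
      (fun u v => abs_signA_le _ _ _ _) (fun u v => abs_signA_le _ _ _ _)
  have e3012 : (∫ w : (ℝ × ℝ) × ℝ × ℝ, signA w.2.1 x1 x2 w.1.1 * signA w.2.2 y1 y2 w.1.2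
      ∂((μ.prod ν).prod (μ.prod ν))) =
      (∫ u, ∫ v, signA v x1 x2 u ∂μ ∂μ) * (∫ u, ∫ v, signA v y1 y2 u ∂ν ∂ν) :=
    factor μ ν (fun u v => signA v x1 x2 u) (fun u v => signA v y1 y2 u)
      (measurable_signA4 measurable_snd measurable_const measurable_const measurable_fst)
      (measurable_signA4 measurable_snd measurable_const measurable_const measurable_fst)
      (fun u v => abs_signA_le _ _ _ _) (fun u v => abs_signA_le _ _ _ _)
  have e3021 : (∫ w : (ℝ × ℝ) × ℝ × ℝ, signA w.2.1 x1 w.1.1 x2 * signA w.2.2 y1 w.1.2 y2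
      ∂((μ.prod ν).prod (μ.prod ν))) =
      (∫ u, ∫ v, signA v x1 u x2 ∂μ ∂μ) * (∫ u, ∫ v, signA v y1 u y2 ∂ν ∂ν) :=
    factor μ ν (fun u v => signA v x1 u x2) (fun u v => signA v y1 u y2)
      (measurable_signA4 measurable_snd measurable_const measurable_fst measurable_const)
      (measurable_signA4 measurable_snd measurable_const measurable_fst measurable_const)
      (fun u v => abs_signA_le _ _ _ _) (fun u v => abs_signA_le _ _ _ _)
  have e3102 : (∫ w : (ℝ × ℝ) × ℝ × ℝ, signA w.2.1 x2 x1 w.1.1 * signA w.2.2 y2 y1 w.1.2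
      ∂((μ.prod ν).prod (μ.prod ν))) =
      (∫ u, ∫ v, signA v x2 x1 u ∂μ ∂μ) * (∫ u, ∫ v, signA v y2 y1 u ∂ν ∂ν) :=
    factor μ ν (fun u v => signA v x2 x1 u) (fun u v => signA v y2 y1 u)
      (measurable_signA4 measurable_snd measurable_const measurable_const measurable_fst)
      (measurable_signA4 measurable_snd measurable_const measurable_const measurable_fst)
      (fun u v => abs_signA_le _ _ _ _) (fun u v => abs_signA_le _ _ _ _)
  have e3120 : (∫ w : (ℝ × ℝ) × ℝ × ℝ, signA w.2.1 x2 w.1.1 x1 * signA w.2.2 y2 w.1.2 y1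
      ∂((μ.prod ν).prod (μ.prod ν))) =
      (∫ u, ∫ v, signA v x2 u x1 ∂μ ∂μ) * (∫ u, ∫ v, signA v y2 u y1 ∂ν ∂ν) :=
    factor μ ν (fun u v => signA v x2 u x1) (fun u v => signA v y2 u y1)
      (measurable_signA4 measurable_snd measurable_const measurable_fst measurable_const)
      (measurable_signA4 measurable_snd measurable_const measurable_fst measurable_const)
      (fun u v => abs_signA_le _ _ _ _) (fun u v => abs_signA_le _ _ _ _)
  have e3201 : (∫ w : (ℝ × ℝ) × ℝ × ℝ, signA w.2.1 w.1.1 x1 x2 * signA w.2.2 w.1.2 y1 y2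
      ∂((μ.prod ν).prod (μ.prod ν))) =
      (∫ u, ∫ v, signA v u x1 x2 ∂μ ∂μ) * (∫ u, ∫ v, signA v u y1 y2 ∂ν ∂ν) :=
    factor μ ν (fun u v => signA v u x1 x2) (fun u v => signA v u y1 y2)
      (measurable_signA4 measurable_snd measurable_fst measurable_const measurable_const)
      (measurable_signA4 measurable_snd measurable_fst measurable_const measurable_const)
      (fun u v => abs_signA_le _ _ _ _) (fun u v => abs_signA_le _ _ _ _)
  have e3210 : (∫ w : (ℝ × ℝ) × ℝ × ℝ, signA w.2.1 w.1.1 x2 x1 * signA w.2.2 w.1.2 y2 y1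
      ∂((μ.prod ν).prod (μ.prod ν))) =
      (∫ u, ∫ v, signA v u x2 x1 ∂μ ∂μ) * (∫ u, ∫ v, signA v u y2 y1 ∂ν ∂ν) :=
    factor μ ν (fun u v => signA v u x2 x1) (fun u v => signA v u y2 y1)
      (measurable_signA4 measurable_snd measurable_fst measurable_const measurable_const)
      (measurable_signA4 measurable_snd measurable_fst measurable_const measurable_const)
      (fun u v => abs_signA_le _ _ _ _) (fun u v => abs_signA_le _ _ _ _)
  rw [e0123, e0132, e0213, e0231, e0312, e0321, e1023, e1032, e1203, e1230, e1302, e1320, e2013, e2031, e2103, e2130, e2301, e2310, e3012, e3021, e3102, e3120, e3201, e3210]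
  rw [red0132 μ x1 x2, red0132 ν y1 y2, red0213 μ x1 x2, red0213 ν y1 y2, red0231 μ x1 x2, red0231 ν y1 y2, red0312 μ x1 x2, red0312 ν y1 y2, red0321 μ x1 x2, red0321 ν y1 y2, red1023 μ x1 x2, red1023 ν y1 y2, red1032 μ x1 x2, red1032 ν y1 y2, red1203 μ x1 x2, red1203 ν y1 y2, red1230 μ x1 x2, red1230 ν y1 y2, red1302 μ x1 x2, red1302 ν y1 y2, red1320 μ x1 x2, red1320 ν y1 y2, red2013 μ x1 x2, red2013 ν y1 y2, red2031 μ x1 x2, red2031 ν y1 y2, red2103 μ x1 x2, red2103 ν y1 y2, red2130 μ x1 x2, red2130 ν y1 y2, red2301 μ x1 x2, red2301 ν y1 y2, red2310 μ x1 x2, red2310 ν y1 y2, red3012 μ x1 x2, red3012 ν y1 y2, red3021 μ x1 x2, red3021 ν y1 y2, red3102 μ x1 x2, red3102 ν y1 y2, red3120 μ x1 x2, red3120 ν y1 y2, red3201 μ x1 x2, red3201 ν y1 y2, red3210 μ x1 x2, red3210 ν y1 y2]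
  ring
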